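/- Let n ≥ 1 and let U be the associative unital ℂ-algebra generated by elements f_1,…,f_n, g_1,…,g_n, c subject to the relations [f_i, g_j] = −δ_{ij} c, [f_i, f_j] = [g_i, g_j] = 0, and c central (the universal enveloping algebra of the (2n+1)-dimensional Heisenberg Lie algebra with bracket [f_i, g_i] = −c). Let U act on U ⊗ ℂ[q_1,…,q_n] and set P = Σ_{j=1}^n (i f_j q_j + g_j ∂_{q_j}), an operator on U ⊗ ℂ[q_1,…,q_n]. Let β denote the symmetrization map from the symmetric algebra on span(f_1,…,f_n, g_1,…,g_n, c) (with coefficients in End ℂ[q]) to U ⊗ End ℂ[q], and let Q = Σ_j (i f_j q_j + g_j ∂_{q_j}) regarded in the symmetric algebra. Then for every v ∈ ℂ[q_1,…,q_n]: β(Q² )v = (P² − (i/2) n c) v and β(Q³)v = (P³ − (i/2)(3n+1) P c) v. -/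
import Mathlib


noncomputable section
open MvPolynomial TensorProduct

/-- ℂ[q₁,…,q_n]. -/
abbrev SQ (n : ℕ) := MvPolynomial (Fin n) ℂ
abbrev OpQ (n : ℕ) := Module.End ℂ (SQ n)

def mq {n : ℕ} (j : Fin n) : OpQ n := LinearMap.mulLeft ℂ (X j)
def dq {n : ℕ} (j : Fin n) : OpQ n := (pderiv j).toLinearMap

variable {n : ℕ} {U : Type*} [Ring U] [Algebra ℂ U]

/-- The operator on U ⊗ ℂ[q] given by left multiplication by `u` on the first
factor and by `T` on the second factor. -/
def opT (u : U) (T : OpQ n) : Module.End ℂ (U ⊗[ℂ] SQ n) :=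
  TensorProduct.map (LinearMap.mulLeft ℂ u) T

/-- The Lie-algebra element attached to an index in `Fin n ⊕ Fin n`
(f's, then g's). -/
def iota (f g : Fin n → U) : Fin n ⊕ Fin n → U := Sum.elim f g

/-- The End ℂ[q]-coefficient attached to an index: i·q_j for an f-index and
∂_{q_j} for a g-index, so that Q = Σ_a ι(a) ⊗ τ(a) = Σ_j (i f_j q_j + g_j ∂_{q_j}). -/
def tau (n : ℕ) : Fin n ⊕ Fin n → OpQ n :=
  Sum.elim (fun j => Complex.I • mq j) (fun j => dq j)

/-- P = Σ_j (i f_j q_j + g_j ∂_{q_j}) as an operator on U ⊗ ℂ[q]. -/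
def Pop (f g : Fin n → U) : Module.End ℂ (U ⊗[ℂ] SQ n) :=
  ∑ a : Fin n ⊕ Fin n, opT (iota f g a) (tau n a)

/-- β(Q²): the degree-2 part of Q² with the ū-monomials symmetrized. -/
def betaQ2 (f g : Fin n → U) : Module.End ℂ (U ⊗[ℂ] SQ n) :=
  ∑ a : Fin n ⊕ Fin n, ∑ b : Fin n ⊕ Fin n,
    (1/2 : ℂ) • opT (iota f g a * iota f g b + iota f g b * iota f g a)
      (tau n a * tau n b)

/-- The full symmetrization (1/3!)Σ_{σ∈S₃} of a product of three elements. -/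
def sym3 (u v w : U) : U :=
  u * v * w + u * w * v + v * u * w + v * w * u + w * u * v + w * v * u

/-- β(Q³): Q³ with the ū-monomials symmetrized. -/
def betaQ3 (f g : Fin n → U) : Module.End ℂ (U ⊗[ℂ] SQ n) :=
  ∑ a : Fin n ⊕ Fin n, ∑ b : Fin n ⊕ Fin n, ∑ c' : Fin n ⊕ Fin n,
    (1/6 : ℂ) • opT (sym3 (iota f g a) (iota f g b) (iota f g c'))
      (tau n a * tau n b * tau n c')

-- basic lemmas
lemma opT_mul (u u' : U) (T T' : OpQ n) :
    opT u T * opT u' T' = opT (u * u') (T * T') := by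
  unfold opT
  rw [LinearMap.mulLeft_mul]
  simp only [Module.End.mul_eq_comp]
  exact (TensorProduct.map_comp _ _ _ _).symm

lemma opT_smul_left (z : ℂ) (u : U) (T : OpQ n) : opT (z • u) T = z • opT u T := by
  apply TensorProduct.ext'
  intro x y
  simp [opT, smul_mul_assoc, TensorProduct.smul_tmul']

lemma opT_smul_right (z : ℂ) (u : U) (T : OpQ n) : opT u (z • T) = z • opT u T := by
  apply TensorProduct.ext'
  intro x y
  simp [opT, TensorProduct.tmul_smul]

lemma opT_add_left (u u' : U) (T : OpQ n) : opT (u + u') T = opT u T + opT u' T := by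
  apply TensorProduct.ext'
  intro x y
  simp [opT, add_mul, TensorProduct.add_tmul]

lemma opT_add_right (u : U) (T T' : OpQ n) : opT u (T + T') = opT u T + opT u T' := by
  apply TensorProduct.ext'
  intro x y
  simp [opT, TensorProduct.tmul_add]

lemma opT_sub_left (u u' : U) (T : OpQ n) : opT (u - u') T = opT u T - opT u' T := by
  apply TensorProduct.ext'
  intro x y
  simp [opT, sub_mul, TensorProduct.sub_tmul]

def opTr (u : U) : OpQ n →ₗ[ℂ] Module.End ℂ (U ⊗[ℂ] SQ n) where
  toFun := opT u
  map_add' := opT_add_right u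
  map_smul' z T := opT_smul_right z u T

lemma opT_sum_right {α : Type*} (s : Finset α) (u : U) (T : α → OpQ n) :
    ∑ a ∈ s, opT u (T a) = opT u (∑ a ∈ s, T a) :=
  (map_sum (opTr u) T s).symm

-- base operator relations
lemma dq_mq (j k : Fin n) :
    dq j * mq k = mq k * dq j + (if j = k then 1 else 0) := by
  ext p
  by_cases h : j = k
  · subst h
    simp [dq, mq, pderiv_mul, Module.End.mul_apply, add_comm]
  · simp [dq, mq, pderiv_mul, Module.End.mul_apply, h, pderiv_X_of_ne (Ne.symm h)]

lemma mq_comm (j k : Fin n) : mq j * mq k = mq k * mq j := by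
  ext p
  simp [mq, Module.End.mul_apply, ← mul_assoc, mul_comm (X j) (X k)]

lemma pderiv_pderiv_comm (j k : Fin n) (p : SQ n) :
    pderiv j (pderiv k p) = pderiv k (pderiv j p) := by
  induction p using MvPolynomial.induction_on with
  | C a => simp
  | add p q hp hq => simp [hp, hq]
  | mul_X p s hp =>
    simp only [pderiv_mul, map_add, pderiv_mul, hp]
    by_cases hjs : j = s <;> by_cases hks : k = s <;>
      simp [hjs, hks, pderiv_X, Pi.single_apply]

def kappa {n : ℕ} : Fin n ⊕ Fin n → Fin n ⊕ Fin n → ℂ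
  | .inl i, .inr j => if i = j then -1 else 0
  | .inr i, .inl j => if i = j then 1 else 0
  | .inl _, .inl _ => 0
  | .inr _, .inr _ => 0

@[simp] lemma kappa_ll (i j : Fin n) : kappa (.inl i) (.inl j) = 0 := rfl
@[simp] lemma kappa_rr (i j : Fin n) : kappa (.inr i) (.inr j) = 0 := rfl
@[simp] lemma kappa_lr (i j : Fin n) :
    kappa (.inl i) (.inr j) = if i = j then -1 else 0 := rfl
@[simp] lemma kappa_rl (i j : Fin n) :
    kappa (.inr i) (.inl j) = if i = j then 1 else 0 := rfl

@[simp] lemma tau_l (j : Fin n) : tau n (.inl j) = Complex.I • mq j := rfl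
@[simp] lemma tau_r (j : Fin n) : tau n (.inr j) = dq j := rfl

/-- The key middle sum: `∑ κ a b • (τ a * T * τ b)`. -/
lemma sum_kappa_mid (T : OpQ n) :
    (∑ a : Fin n ⊕ Fin n, ∑ b : Fin n ⊕ Fin n,
        kappa a b • (tau n a * T * tau n b))
      = Complex.I • ∑ j : Fin n, (dq j * T * mq j - mq j * T * dq j) := by
  simp only [Fintype.sum_sum_type, kappa_ll, kappa_rr, kappa_lr, kappa_rl,
    tau_l, tau_r, zero_smul, Finset.sum_const_zero, add_zero, zero_add,
    ite_smul, Finset.sum_ite_eq, Finset.mem_univ, if_true]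
  rw [← Finset.sum_add_distrib, Finset.smul_sum]
  refine Finset.sum_congr rfl fun j _ => ?_
  simp only [smul_mul_assoc, mul_smul_comm, neg_smul, one_smul, smul_sub]
  module

lemma mid_one : (∑ j : Fin n, (dq j * (1 : OpQ n) * mq j - mq j * 1 * dq j))
    = (n : ℂ) • (1 : OpQ n) := by
  have : ∀ j : Fin n, dq j * (1 : OpQ n) * mq j - mq j * 1 * dq j = 1 := by
    intro j
    rw [mul_one, mul_one, dq_mq j j, if_pos rfl]
    abel
  rw [Finset.sum_congr rfl fun j _ => this j, Finset.sum_const, Finset.card_univ,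
    Fintype.card_fin, Nat.cast_smul_eq_nsmul]

lemma mid_mq (k : Fin n) :
    (∑ j : Fin n, (dq j * mq k * mq j - mq j * mq k * dq j))
      = ((n : ℂ) + 1) • mq k := by
  have h : ∀ j : Fin n, dq j * mq k * mq j - mq j * mq k * dq j
      = mq k + (if j = k then mq j else 0) := by
    intro j
    rw [dq_mq j k, add_mul, mul_assoc (mq k), dq_mq j j, if_pos rfl, mul_add, mul_one,
      mq_comm j k]
    by_cases h : j = k
    · subst h; simp [mul_assoc]; try abel
    · simp [h, Ne.symm h, mul_assoc]; try abel
  rw [Finset.sum_congr rfl fun j _ => h j, Finset.sum_add_distrib, Finset.sum_const,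
    Finset.card_univ, Fintype.card_fin, Finset.sum_ite_eq']
  simp [add_smul, Nat.cast_smul_eq_nsmul]

lemma dq_comm (j k : Fin n) : dq j * dq k = dq k * dq j := by
  apply LinearMap.ext
  intro p
  exact pderiv_pderiv_comm j k p

lemma mid_dq (k : Fin n) :
    (∑ j : Fin n, (dq j * dq k * mq j - mq j * dq k * dq j))
      = ((n : ℂ) + 1) • dq k := by
  have h : ∀ j : Fin n, dq j * dq k * mq j - mq j * dq k * dq j
      = dq k + (if j = k then dq j else 0) := by
    intro j
    rw [mul_assoc (dq j), dq_mq k j, mul_add, ← mul_assoc (dq j) (mq j), dq_mq j j,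
      if_pos rfl, add_mul, one_mul, mul_assoc (mq j) (dq k) (dq j), ← dq_comm j k,
      ← mul_assoc (mq j) (dq j) (dq k)]
    by_cases h : j = k
    · subst h; simp; abel
    · simp [h, Ne.symm h]
  rw [Finset.sum_congr rfl fun j _ => h j, Finset.sum_add_distrib, Finset.sum_const,
    Finset.card_univ, Fintype.card_fin, Finset.sum_ite_eq']
  simp [add_smul, Nat.cast_smul_eq_nsmul]

lemma half_pull {α M : Type*} [AddCommMonoid M] [Module ℂ M] (s : Finset α) (F : α → M) :
    (∑ x ∈ s, (1/2 : ℂ) • F x) = (1/2 : ℂ) • ∑ x ∈ s, F x :=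
  (Finset.smul_sum).symm

lemma half_sym (u v cc : U) (z : ℂ) (h : v * u = u * v - z • cc) :
    (1/2 : ℂ) • (u * v + v * u) = u * v - (1/2 : ℂ) • (z • cc) := by
  rw [h]; module

def sym3' (u v w : U) : U :=
  u * v * w + u * w * v + v * u * w + v * w * u + w * u * v + w * v * u

lemma cube_decomp (u v w cc : U) (z1 z2 z3 : ℂ) (hcc : ∀ x : U, cc * x = x * cc)
    (h1 : v * u = u * v - z1 • cc) (h2 : w * u = u * w - z2 • cc)
    (h3 : w * v = v * w - z3 • cc) :
    (1/6 : ℂ) • sym3' u v w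
      = u * v * w - (1/2 : ℂ) • (z1 • (cc * w)) - (1/2 : ℂ) • (z2 • (cc * v))
          - (1/2 : ℂ) • (z3 • (cc * u)) := by
  have e1 : u * w * v = u * v * w - z3 • (u * cc) := by
    rw [mul_assoc, h3, mul_sub, mul_smul_comm, ← mul_assoc]
  have e2 : v * u * w = u * v * w - z1 • (cc * w) := by
    rw [h1, sub_mul, smul_mul_assoc]
  have e3 : v * w * u = u * v * w - z1 • (cc * w) - z2 • (v * cc) := by
    rw [mul_assoc, h2, mul_sub, mul_smul_comm, ← mul_assoc, h1, sub_mul, smul_mul_assoc]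
  have e4 : w * u * v = u * v * w - z3 • (u * cc) - z2 • (cc * v) := by
    rw [h2, sub_mul, smul_mul_assoc, e1]
  have e5 : w * v * u = u * v * w - z1 • (cc * w) - z2 • (v * cc) - z3 • (cc * u) := by
    rw [h3, sub_mul, smul_mul_assoc, e3]
  rw [sym3', e1, e2, e3, e4, e5, ← hcc u, ← hcc v]
  module

lemma cube_decomp' (u v w cc : U) (z1 z2 z3 : ℂ) (hcc : ∀ x : U, cc * x = x * cc)
    (h1 : v * u = u * v - z1 • cc) (h2 : w * u = u * w - z2 • cc)
    (h3 : w * v = v * w - z3 • cc) :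
    (1/6 : ℂ) • sym3 u v w
      = u * v * w - (1/2 : ℂ) • (z1 • (cc * w)) - (1/2 : ℂ) • (z2 • (cc * v))
          - (1/2 : ℂ) • (z3 • (cc * u)) :=
  cube_decomp u v w cc z1 z2 z3 hcc h1 h2 h3

lemma half_sym' (u v cc : U) (z : ℂ) (h : v * u = u * v - z • cc) :
    u * v = (1/2 : ℂ) • (u * v + v * u) + (1/2 : ℂ) • (z • cc) := by
  rw [h]; module

lemma cube_decomp2 (u v w cc : U) (z1 z2 z3 : ℂ) (hcc : ∀ x : U, cc * x = x * cc)
    (h1 : v * u = u * v - z1 • cc) (h2 : w * u = u * w - z2 • cc)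
    (h3 : w * v = v * w - z3 • cc) :
    u * v * w = (1/6 : ℂ) • sym3 u v w
      + (1/2 : ℂ) • (z1 • (cc * w)) + (1/2 : ℂ) • (z2 • (cc * v))
      + (1/2 : ℂ) • (z3 • (cc * u)) := by
  rw [cube_decomp' u v w cc z1 z2 z3 hcc h1 h2 h3]
  abel


set_option maxHeartbeats 3200000 in
/-- In the universal enveloping algebra of the Heisenberg Lie algebra with
brackets [f_i, g_j] = −δ_{ij} c (f's commuting, g's commuting, c central),
acting on U ⊗ ℂ[q₁,…,q_n], one has
β(Q²)v = (P² − (i/2) n c) v and β(Q³)v = (P³ − (i/2)(3n+1) P c) v. -/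
theorem beta_Q_pow (hn : 1 ≤ n) (f g : Fin n → U) (c : U)
    (hfg : ∀ i j : Fin n, f i * g j - g j * f i = if i = j then -c else 0)
    (hff : ∀ i j : Fin n, f i * f j = f j * f i)
    (hgg : ∀ i j : Fin n, g i * g j = g j * g i)
    (hc : ∀ u : U, c * u = u * c)
    (v : SQ n) :
    betaQ2 f g (1 ⊗ₜ[ℂ] v)
      = ((Pop f g ^ 2 - ((Complex.I / 2) * (n : ℂ)) • opT c 1 :
            Module.End ℂ (U ⊗[ℂ] SQ n))) (1 ⊗ₜ[ℂ] v) ∧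
    betaQ3 f g (1 ⊗ₜ[ℂ] v)
      = ((Pop f g ^ 3
          - ((Complex.I / 2) * (3 * (n : ℂ) + 1)) • (Pop f g * opT c 1) :
            Module.End ℂ (U ⊗[ℂ] SQ n))) (1 ⊗ₜ[ℂ] v) := by
  have hPop : Pop f g = ∑ a : Fin n ⊕ Fin n, opT (iota f g a) (tau n a) := rfl
  -- commutation in U, organized via kappa
  have hcomm : ∀ a b : Fin n ⊕ Fin n,
      iota f g b * iota f g a = iota f g a * iota f g b - kappa a b • c := by
    rintro (i | i) (j | j) <;>
      simp only [iota, Sum.elim_inl, Sum.elim_inr, kappa_ll, kappa_rr, kappa_lr, kappa_rl,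
        zero_smul, sub_zero]
    · exact hff j i
    · have h2 : ((if i = j then (-1 : ℂ) else 0) • c) = (if i = j then -c else 0) := by
        by_cases h : i = j <;> simp [h]
      rw [h2, ← hfg i j]; abel
    · have h2 : ((if i = j then (1 : ℂ) else 0) • c) = -(if j = i then -c else 0) := by
        by_cases h : i = j
        · subst h; simp
        · simp [h, Ne.symm h]
      rw [h2, ← hfg j i]; abel
    · exact hgg j i
  -- the central scalar sum
  have hS : (∑ a : Fin n ⊕ Fin n, ∑ b : Fin n ⊕ Fin n,
        kappa a b • opT c (tau n a * tau n b))
      = (Complex.I * (n : ℂ)) • opT c (1 : OpQ n) := by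
    have e : ∀ a b : Fin n ⊕ Fin n, kappa a b • opT c (tau n a * tau n b)
        = opT c (kappa a b • (tau n a * 1 * tau n b)) := by
      intro a b; rw [mul_one, opT_smul_right]
    rw [Finset.sum_congr rfl fun a _ => Finset.sum_congr rfl fun b _ => e a b,
      Finset.sum_congr rfl fun a _ => opT_sum_right _ c _, opT_sum_right,
      sum_kappa_mid, mid_one, smul_smul, opT_smul_right]
  have hPc : opT c (1 : OpQ n) * Pop f g = Pop f g * opT c 1 := by
    rw [hPop, Finset.mul_sum, Finset.sum_mul]
    exact Finset.sum_congr rfl fun a _ => by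
      rw [opT_mul, opT_mul, ← hc, one_mul, mul_one]
  -- square
  have hP2 : Pop f g ^ 2 = ∑ a : Fin n ⊕ Fin n, ∑ b : Fin n ⊕ Fin n,
      opT (iota f g a * iota f g b) (tau n a * tau n b) := by
    rw [sq, hPop, Finset.sum_mul_sum]
    exact Finset.sum_congr rfl fun a _ => Finset.sum_congr rfl fun b _ => opT_mul _ _ _ _
  have hpt2 : ∀ a b : Fin n ⊕ Fin n,
      opT (iota f g a * iota f g b) (tau n a * tau n b)
        = (1/2 : ℂ) • opT (iota f g a * iota f g b + iota f g b * iota f g a)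
            (tau n a * tau n b)
          + (1/2 : ℂ) • (kappa a b • opT c (tau n a * tau n b)) := by
    intro a b
    have hu := half_sym' (iota f g a) (iota f g b) c (kappa a b) (hcomm a b)
    conv_lhs => rw [hu]
    simp only [opT_add_left, opT_smul_left]
  have hsplit2 : Pop f g ^ 2
      = betaQ2 f g + (1/2 : ℂ) • ((Complex.I * (n : ℂ)) • opT c 1) := by
    rw [hP2]
    calc (∑ a : Fin n ⊕ Fin n, ∑ b : Fin n ⊕ Fin n,
          opT (iota f g a * iota f g b) (tau n a * tau n b))
        = ∑ a : Fin n ⊕ Fin n, ∑ b : Fin n ⊕ Fin n,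
            ((1/2 : ℂ) • opT (iota f g a * iota f g b + iota f g b * iota f g a)
                (tau n a * tau n b)
              + (1/2 : ℂ) • (kappa a b • opT c (tau n a * tau n b))) :=
          Finset.sum_congr rfl fun a _ => Finset.sum_congr rfl fun b _ => hpt2 a b
      _ = betaQ2 f g + ∑ a : Fin n ⊕ Fin n, ∑ b : Fin n ⊕ Fin n,
            (1/2 : ℂ) • (kappa a b • opT c (tau n a * tau n b)) := by
          simp only [Finset.sum_add_distrib]; rfl
      _ = betaQ2 f g + (1/2 : ℂ) • ((Complex.I * (n : ℂ)) • opT c 1) := by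
          congr 1
          calc (∑ a : Fin n ⊕ Fin n, ∑ b : Fin n ⊕ Fin n,
                (1/2 : ℂ) • (kappa a b • opT c (tau n a * tau n b)))
              = ∑ a : Fin n ⊕ Fin n, (1/2 : ℂ) • ∑ b : Fin n ⊕ Fin n,
                  kappa a b • opT c (tau n a * tau n b) :=
                Finset.sum_congr rfl fun a _ => half_pull _ _
            _ = (1/2 : ℂ) • ∑ a : Fin n ⊕ Fin n, ∑ b : Fin n ⊕ Fin n,
                  kappa a b • opT c (tau n a * tau n b) := half_pull _ _
            _ = (1/2 : ℂ) • ((Complex.I * (n : ℂ)) • opT c 1) := by rw [hS]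
  have hbeta2 : betaQ2 f g
      = Pop f g ^ 2 - ((Complex.I / 2) * (n : ℂ)) • opT c 1 := by
    rw [hsplit2]
    module
  -- cube
  have hP3 : Pop f g ^ 3 = ∑ a : Fin n ⊕ Fin n, ∑ b : Fin n ⊕ Fin n, ∑ c' : Fin n ⊕ Fin n,
      opT (iota f g a * iota f g b * iota f g c')
        (tau n a * tau n b * tau n c') := by
    rw [pow_succ, hP2, Finset.sum_mul]
    refine Finset.sum_congr rfl fun a _ => ?_
    rw [Finset.sum_mul]
    refine Finset.sum_congr rfl fun b _ => ?_
    rw [hPop, Finset.mul_sum]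
    exact Finset.sum_congr rfl fun c' _ => opT_mul _ _ _ _
  have hmid : ∀ b : Fin n ⊕ Fin n,
      (∑ j : Fin n, (dq j * tau n b * mq j - mq j * tau n b * dq j))
        = ((n : ℂ) + 1) • tau n b := by
    rintro (k | k)
    · have e : ∀ j : Fin n,
          dq j * tau n (Sum.inl k) * mq j - mq j * tau n (Sum.inl k) * dq j
            = Complex.I • (dq j * mq k * mq j - mq j * mq k * dq j) := by
        intro j
        rw [tau_l, mul_smul_comm, smul_mul_assoc, mul_smul_comm, smul_mul_assoc, smul_sub]
      calc (∑ j : Fin n, (dq j * tau n (Sum.inl k) * mq j - mq j * tau n (Sum.inl k) * dq j))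
          = ∑ j : Fin n, Complex.I • (dq j * mq k * mq j - mq j * mq k * dq j) :=
            Finset.sum_congr rfl fun j _ => e j
        _ = Complex.I • ∑ j : Fin n, (dq j * mq k * mq j - mq j * mq k * dq j) :=
            (Finset.smul_sum).symm
        _ = Complex.I • (((n : ℂ) + 1) • mq k) := by rw [mid_mq]
        _ = ((n : ℂ) + 1) • tau n (Sum.inl k) := by rw [smul_comm]; rfl
    · simp only [tau_r]; exact mid_dq k
  have hC1 : (∑ a : Fin n ⊕ Fin n, ∑ b : Fin n ⊕ Fin n, ∑ c' : Fin n ⊕ Fin n,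
        kappa a b • opT (c * iota f g c') (tau n a * tau n b * tau n c'))
      = (Complex.I * (n : ℂ)) • (Pop f g * opT c 1) := by
    have e1 : ∀ a b : Fin n ⊕ Fin n,
        (∑ c' : Fin n ⊕ Fin n,
            kappa a b • opT (c * iota f g c') (tau n a * tau n b * tau n c'))
          = kappa a b • (opT c (tau n a * tau n b) * Pop f g) := by
      intro a b
      rw [← Finset.smul_sum]
      congr 1
      rw [hPop, Finset.mul_sum]
      exact Finset.sum_congr rfl fun c' _ => (opT_mul _ _ _ _).symm
    calc (∑ a : Fin n ⊕ Fin n, ∑ b : Fin n ⊕ Fin n, ∑ c' : Fin n ⊕ Fin n,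
          kappa a b • opT (c * iota f g c') (tau n a * tau n b * tau n c'))
        = ∑ a : Fin n ⊕ Fin n, ∑ b : Fin n ⊕ Fin n,
            kappa a b • (opT c (tau n a * tau n b) * Pop f g) :=
          Finset.sum_congr rfl fun a _ => Finset.sum_congr rfl fun b _ => e1 a b
      _ = (∑ a : Fin n ⊕ Fin n, ∑ b : Fin n ⊕ Fin n,
            kappa a b • opT c (tau n a * tau n b)) * Pop f g := by
          rw [Finset.sum_mul]
          refine Finset.sum_congr rfl fun a _ => ?_
          rw [Finset.sum_mul]
          exact Finset.sum_congr rfl fun b _ => (smul_mul_assoc _ _ _).symm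
      _ = ((Complex.I * (n : ℂ)) • opT c 1) * Pop f g := by rw [hS]
      _ = (Complex.I * (n : ℂ)) • (opT c (1 : OpQ n) * Pop f g) := smul_mul_assoc _ _ _
      _ = (Complex.I * (n : ℂ)) • (Pop f g * opT c 1) := by rw [hPc]
  have hC3 : (∑ a : Fin n ⊕ Fin n, ∑ b : Fin n ⊕ Fin n, ∑ c' : Fin n ⊕ Fin n,
        kappa b c' • opT (c * iota f g a) (tau n a * tau n b * tau n c'))
      = (Complex.I * (n : ℂ)) • (Pop f g * opT c 1) := by
    have e1 : ∀ a : Fin n ⊕ Fin n,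
        (∑ b : Fin n ⊕ Fin n, ∑ c' : Fin n ⊕ Fin n,
            kappa b c' • opT (c * iota f g a) (tau n a * tau n b * tau n c'))
          = opT (iota f g a) (tau n a) * ((Complex.I * (n : ℂ)) • opT c 1) := by
      intro a
      have e2 : ∀ b c' : Fin n ⊕ Fin n,
          kappa b c' • opT (c * iota f g a) (tau n a * tau n b * tau n c')
            = opT (iota f g a) (tau n a) * (kappa b c' • opT c (tau n b * tau n c')) := by
        intro b c'
        rw [mul_smul_comm, opT_mul, hc, mul_assoc]
      rw [Finset.sum_congr rfl fun b _ => Finset.sum_congr rfl fun c' _ => e2 b c',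
        Finset.sum_congr rfl fun b _ => (Finset.mul_sum _ _ _).symm, ← Finset.mul_sum, hS]
    rw [Finset.sum_congr rfl fun a _ => e1 a, ← Finset.sum_mul, ← hPop, mul_smul_comm]
  have hC2 : (∑ a : Fin n ⊕ Fin n, ∑ b : Fin n ⊕ Fin n, ∑ c' : Fin n ⊕ Fin n,
        kappa a c' • opT (c * iota f g b) (tau n a * tau n b * tau n c'))
      = (Complex.I * ((n : ℂ) + 1)) • (Pop f g * opT c 1) := by
    have e1 : ∀ b : Fin n ⊕ Fin n,
        (∑ a : Fin n ⊕ Fin n, ∑ c' : Fin n ⊕ Fin n,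
            kappa a c' • opT (c * iota f g b) (tau n a * tau n b * tau n c'))
          = (Complex.I * ((n : ℂ) + 1)) • (opT c 1 * opT (iota f g b) (tau n b)) := by
      intro b
      have e2 : ∀ a c' : Fin n ⊕ Fin n,
          kappa a c' • opT (c * iota f g b) (tau n a * tau n b * tau n c')
            = opT (c * iota f g b) (kappa a c' • (tau n a * tau n b * tau n c')) :=
        fun a c' => (opT_smul_right _ _ _).symm
      calc (∑ a : Fin n ⊕ Fin n, ∑ c' : Fin n ⊕ Fin n,
            kappa a c' • opT (c * iota f g b) (tau n a * tau n b * tau n c'))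
          = ∑ a : Fin n ⊕ Fin n, ∑ c' : Fin n ⊕ Fin n,
              opT (c * iota f g b) (kappa a c' • (tau n a * tau n b * tau n c')) :=
            Finset.sum_congr rfl fun a _ => Finset.sum_congr rfl fun c' _ => e2 a c'
        _ = ∑ a : Fin n ⊕ Fin n, opT (c * iota f g b)
              (∑ c' : Fin n ⊕ Fin n, kappa a c' • (tau n a * tau n b * tau n c')) :=
            Finset.sum_congr rfl fun a _ => opT_sum_right _ _ _
        _ = opT (c * iota f g b) (∑ a : Fin n ⊕ Fin n, ∑ c' : Fin n ⊕ Fin n,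
              kappa a c' • (tau n a * tau n b * tau n c')) := opT_sum_right _ _ _
        _ = opT (c * iota f g b) (Complex.I • (((n : ℂ) + 1) • tau n b)) := by
            rw [sum_kappa_mid, hmid b]
        _ = (Complex.I * ((n : ℂ) + 1)) • opT (c * iota f g b) (tau n b) := by
            rw [smul_smul, opT_smul_right]
        _ = (Complex.I * ((n : ℂ) + 1)) • (opT c 1 * opT (iota f g b) (tau n b)) := by
            rw [opT_mul, one_mul]
    calc (∑ a : Fin n ⊕ Fin n, ∑ b : Fin n ⊕ Fin n, ∑ c' : Fin n ⊕ Fin n,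
          kappa a c' • opT (c * iota f g b) (tau n a * tau n b * tau n c'))
        = ∑ b : Fin n ⊕ Fin n, ∑ a : Fin n ⊕ Fin n, ∑ c' : Fin n ⊕ Fin n,
            kappa a c' • opT (c * iota f g b) (tau n a * tau n b * tau n c') :=
          Finset.sum_comm
      _ = ∑ b : Fin n ⊕ Fin n,
            (Complex.I * ((n : ℂ) + 1)) • (opT c 1 * opT (iota f g b) (tau n b)) :=
          Finset.sum_congr rfl fun b _ => e1 b
      _ = (Complex.I * ((n : ℂ) + 1)) • ∑ b : Fin n ⊕ Fin n,
            (opT c 1 * opT (iota f g b) (tau n b)) := (Finset.smul_sum).symm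
      _ = (Complex.I * ((n : ℂ) + 1)) • (opT c 1 * ∑ b : Fin n ⊕ Fin n,
            opT (iota f g b) (tau n b)) := by rw [Finset.mul_sum]
      _ = (Complex.I * ((n : ℂ) + 1)) • (opT c 1 * Pop f g) := rfl
      _ = (Complex.I * ((n : ℂ) + 1)) • (Pop f g * opT c 1) := by rw [hPc]
  have hpt3 : ∀ a b c' : Fin n ⊕ Fin n,
      opT (iota f g a * iota f g b * iota f g c') (tau n a * tau n b * tau n c')
        = (1/6 : ℂ) • opT (sym3 (iota f g a) (iota f g b) (iota f g c'))
            (tau n a * tau n b * tau n c')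
          + (1/2 : ℂ) • (kappa a b • opT (c * iota f g c') (tau n a * tau n b * tau n c'))
          + (1/2 : ℂ) • (kappa a c' • opT (c * iota f g b) (tau n a * tau n b * tau n c'))
          + (1/2 : ℂ) • (kappa b c' • opT (c * iota f g a) (tau n a * tau n b * tau n c')) := by
    intro a b c'
    have hu := cube_decomp2 (iota f g a) (iota f g b) (iota f g c') c
      (kappa a b) (kappa a c') (kappa b c') hc (hcomm a b) (hcomm a c') (hcomm b c')
    conv_lhs => rw [hu]
    simp only [opT_add_left, opT_smul_left]
  have ht1 : (∑ a : Fin n ⊕ Fin n, ∑ b : Fin n ⊕ Fin n, ∑ c' : Fin n ⊕ Fin n,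
        (1/2 : ℂ) • (kappa a b • opT (c * iota f g c') (tau n a * tau n b * tau n c')))
      = (1/2 : ℂ) • ((Complex.I * (n : ℂ)) • (Pop f g * opT c 1)) := by
    calc (∑ a : Fin n ⊕ Fin n, ∑ b : Fin n ⊕ Fin n, ∑ c' : Fin n ⊕ Fin n,
          (1/2 : ℂ) • (kappa a b • opT (c * iota f g c') (tau n a * tau n b * tau n c')))
        = ∑ a : Fin n ⊕ Fin n, ∑ b : Fin n ⊕ Fin n, (1/2 : ℂ) • ∑ c' : Fin n ⊕ Fin n,
            kappa a b • opT (c * iota f g c') (tau n a * tau n b * tau n c') :=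
          Finset.sum_congr rfl fun a _ => Finset.sum_congr rfl fun b _ => half_pull _ _
      _ = ∑ a : Fin n ⊕ Fin n, (1/2 : ℂ) • ∑ b : Fin n ⊕ Fin n, ∑ c' : Fin n ⊕ Fin n,
            kappa a b • opT (c * iota f g c') (tau n a * tau n b * tau n c') :=
          Finset.sum_congr rfl fun a _ => half_pull _ _
      _ = (1/2 : ℂ) • ∑ a : Fin n ⊕ Fin n, ∑ b : Fin n ⊕ Fin n, ∑ c' : Fin n ⊕ Fin n,
            kappa a b • opT (c * iota f g c') (tau n a * tau n b * tau n c') :=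
          half_pull _ _
      _ = (1/2 : ℂ) • ((Complex.I * (n : ℂ)) • (Pop f g * opT c 1)) := by rw [hC1]
  have ht2 : (∑ a : Fin n ⊕ Fin n, ∑ b : Fin n ⊕ Fin n, ∑ c' : Fin n ⊕ Fin n,
        (1/2 : ℂ) • (kappa a c' • opT (c * iota f g b) (tau n a * tau n b * tau n c')))
      = (1/2 : ℂ) • ((Complex.I * ((n : ℂ) + 1)) • (Pop f g * opT c 1)) := by
    calc (∑ a : Fin n ⊕ Fin n, ∑ b : Fin n ⊕ Fin n, ∑ c' : Fin n ⊕ Fin n,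
          (1/2 : ℂ) • (kappa a c' • opT (c * iota f g b) (tau n a * tau n b * tau n c')))
        = ∑ a : Fin n ⊕ Fin n, ∑ b : Fin n ⊕ Fin n, (1/2 : ℂ) • ∑ c' : Fin n ⊕ Fin n,
            kappa a c' • opT (c * iota f g b) (tau n a * tau n b * tau n c') :=
          Finset.sum_congr rfl fun a _ => Finset.sum_congr rfl fun b _ => half_pull _ _
      _ = ∑ a : Fin n ⊕ Fin n, (1/2 : ℂ) • ∑ b : Fin n ⊕ Fin n, ∑ c' : Fin n ⊕ Fin n,
            kappa a c' • opT (c * iota f g b) (tau n a * tau n b * tau n c') :=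
          Finset.sum_congr rfl fun a _ => half_pull _ _
      _ = (1/2 : ℂ) • ∑ a : Fin n ⊕ Fin n, ∑ b : Fin n ⊕ Fin n, ∑ c' : Fin n ⊕ Fin n,
            kappa a c' • opT (c * iota f g b) (tau n a * tau n b * tau n c') :=
          half_pull _ _
      _ = (1/2 : ℂ) • ((Complex.I * ((n : ℂ) + 1)) • (Pop f g * opT c 1)) := by rw [hC2]
  have ht3 : (∑ a : Fin n ⊕ Fin n, ∑ b : Fin n ⊕ Fin n, ∑ c' : Fin n ⊕ Fin n,
        (1/2 : ℂ) • (kappa b c' • opT (c * iota f g a) (tau n a * tau n b * tau n c')))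
      = (1/2 : ℂ) • ((Complex.I * (n : ℂ)) • (Pop f g * opT c 1)) := by
    calc (∑ a : Fin n ⊕ Fin n, ∑ b : Fin n ⊕ Fin n, ∑ c' : Fin n ⊕ Fin n,
          (1/2 : ℂ) • (kappa b c' • opT (c * iota f g a) (tau n a * tau n b * tau n c')))
        = ∑ a : Fin n ⊕ Fin n, ∑ b : Fin n ⊕ Fin n, (1/2 : ℂ) • ∑ c' : Fin n ⊕ Fin n,
            kappa b c' • opT (c * iota f g a) (tau n a * tau n b * tau n c') :=
          Finset.sum_congr rfl fun a _ => Finset.sum_congr rfl fun b _ => half_pull _ _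
      _ = ∑ a : Fin n ⊕ Fin n, (1/2 : ℂ) • ∑ b : Fin n ⊕ Fin n, ∑ c' : Fin n ⊕ Fin n,
            kappa b c' • opT (c * iota f g a) (tau n a * tau n b * tau n c') :=
          Finset.sum_congr rfl fun a _ => half_pull _ _
      _ = (1/2 : ℂ) • ∑ a : Fin n ⊕ Fin n, ∑ b : Fin n ⊕ Fin n, ∑ c' : Fin n ⊕ Fin n,
            kappa b c' • opT (c * iota f g a) (tau n a * tau n b * tau n c') :=
          half_pull _ _
      _ = (1/2 : ℂ) • ((Complex.I * (n : ℂ)) • (Pop f g * opT c 1)) := by rw [hC3]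
  have hsplit3 : Pop f g ^ 3
      = betaQ3 f g + (1/2 : ℂ) • ((Complex.I * (n : ℂ)) • (Pop f g * opT c 1))
        + (1/2 : ℂ) • ((Complex.I * ((n : ℂ) + 1)) • (Pop f g * opT c 1))
        + (1/2 : ℂ) • ((Complex.I * (n : ℂ)) • (Pop f g * opT c 1)) := by
    rw [hP3]
    calc (∑ a : Fin n ⊕ Fin n, ∑ b : Fin n ⊕ Fin n, ∑ c' : Fin n ⊕ Fin n,
          opT (iota f g a * iota f g b * iota f g c') (tau n a * tau n b * tau n c'))
        = ∑ a : Fin n ⊕ Fin n, ∑ b : Fin n ⊕ Fin n, ∑ c' : Fin n ⊕ Fin n,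
            ((1/6 : ℂ) • opT (sym3 (iota f g a) (iota f g b) (iota f g c'))
                (tau n a * tau n b * tau n c')
              + (1/2 : ℂ) • (kappa a b • opT (c * iota f g c')
                  (tau n a * tau n b * tau n c'))
              + (1/2 : ℂ) • (kappa a c' • opT (c * iota f g b)
                  (tau n a * tau n b * tau n c'))
              + (1/2 : ℂ) • (kappa b c' • opT (c * iota f g a)
                  (tau n a * tau n b * tau n c'))) :=
          Finset.sum_congr rfl fun a _ => Finset.sum_congr rfl fun b _ =>
            Finset.sum_congr rfl fun c' _ => hpt3 a b c'
      _ = betaQ3 f g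
          + (∑ a : Fin n ⊕ Fin n, ∑ b : Fin n ⊕ Fin n, ∑ c' : Fin n ⊕ Fin n,
              (1/2 : ℂ) • (kappa a b • opT (c * iota f g c')
                (tau n a * tau n b * tau n c')))
          + (∑ a : Fin n ⊕ Fin n, ∑ b : Fin n ⊕ Fin n, ∑ c' : Fin n ⊕ Fin n,
              (1/2 : ℂ) • (kappa a c' • opT (c * iota f g b)
                (tau n a * tau n b * tau n c')))
          + (∑ a : Fin n ⊕ Fin n, ∑ b : Fin n ⊕ Fin n, ∑ c' : Fin n ⊕ Fin n,
              (1/2 : ℂ) • (kappa b c' • opT (c * iota f g a)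
                (tau n a * tau n b * tau n c'))) := by
          simp only [Finset.sum_add_distrib]; rfl
      _ = betaQ3 f g + (1/2 : ℂ) • ((Complex.I * (n : ℂ)) • (Pop f g * opT c 1))
          + (1/2 : ℂ) • ((Complex.I * ((n : ℂ) + 1)) • (Pop f g * opT c 1))
          + (1/2 : ℂ) • ((Complex.I * (n : ℂ)) • (Pop f g * opT c 1)) := by
          rw [ht1, ht2, ht3]
  have hbeta3 : betaQ3 f g
      = Pop f g ^ 3 - ((Complex.I / 2) * (3 * (n : ℂ) + 1)) • (Pop f g * opT c 1) := by
    rw [hsplit3]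
    module
  exact ⟨DFunLike.congr_fun hbeta2 _, DFunLike.congr_fun hbeta3 _⟩
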